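/- Let n ≥ 3, let f : ℝⁿ → ℝ be differentiable, ℓ-smooth for some ℓ > 0, and bounded below by f* ∈ ℝ. Let σ : ℕ → ℝ satisfy 0 < σ(k) ≤ C for all k and some constant C > 0, let L be the discrete periodic Laplacian, A_σ = I − σL, and define the modified LSGD iterates x^{k+1} = x^k − (1/ℓ) A_{σ(k)}^{-1} ∇f(x^k). Then for every ε > 0 there exists an index k with 0 ≤ k ≤ 2(1 + 4C)² ℓ (f(x⁰) − f*) / ((1 + 8C) ε²) such that ‖∇f(x^k)‖ ≤ ε; i.e., the modified LSGD reaches an ε-first-order stationary point within 2(1 + 4C)² ℓ (f(x⁰) − f*)/((1 + 8C)ε²) iterations. -/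

import Mathlib

open Matrix Polynomial

/-- The discrete one-dimensional Laplacian with periodic boundary conditions:
the circulant matrix whose first column is `(-2, 1, 0, …, 0, 1)ᵀ`. -/
noncomputable def Lmat (n : ℕ) : Matrix (Fin n) (Fin n) ℝ :=
  Matrix.circulant (fun i : Fin n =>
    if (i : ℕ) = 0 then -2 else if (i : ℕ) = 1 ∨ (i : ℕ) = n - 1 then 1 else 0)

/-- The Laplacian smoothing matrix `A_σ = I - σ L`. -/
noncomputable def Amat (n : ℕ) (σ : ℝ) : Matrix (Fin n) (Fin n) ℝ :=
  1 - σ • Lmat n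

section Aux

variable {n : ℕ} [NeZero n]

lemma Lmat_mulVec (hn : 3 ≤ n) (y : Fin n → ℝ) (i : Fin n) :
    (Lmat n *ᵥ y) i = y (i - 1) - 2 * y i + y (i + 1) := by
  obtain ⟨m, rfl⟩ : ∃ m, n = m + 3 := ⟨n - 3, by omega⟩
  have key : (Lmat (m+3) *ᵥ y) i = ∑ k : Fin (m+3),
      (if (k : ℕ) = 0 then (-2:ℝ) else if (k : ℕ) = 1 ∨ (k : ℕ) = (m+3) - 1 then 1 else 0) * y (i - k) := by
    rw [mulVec]
    refine Fintype.sum_equiv (Equiv.subLeft i) _ _ ?_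
    intro j
    simp [Lmat, circulant_apply, dotProduct, Equiv.subLeft_apply]
  have hv1 : ((1 : Fin (m+3)) : ℕ) = 1 := rfl
  have hvm1 : ((-1 : Fin (m+3)) : ℕ) = m + 2 := Fin.coe_neg_one
  rw [key]
  have hsplit : ∀ k : Fin (m+3),
      (if (k : ℕ) = 0 then (-2:ℝ) else if (k : ℕ) = 1 ∨ (k : ℕ) = (m+3) - 1 then 1 else 0) * y (i - k)
      = (if k = 0 then -2 * y i else 0) + (if k = 1 then y (i - 1) else 0)
        + (if k = -1 then y (i + 1) else 0) := by
    intro k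
    have e0 : ((k:ℕ) = 0) ↔ (k = 0) := by
      constructor
      · intro h; exact Fin.ext (by simpa using h)
      · intro h; subst h; rfl
    have e1 : ((k:ℕ) = 1) ↔ (k = 1) := by
      constructor
      · intro h; exact Fin.ext (by simp [h, hv1])
      · intro h; subst h; rfl
    have e2 : ((k:ℕ) = (m+3) - 1) ↔ (k = -1) := by
      constructor
      · intro h; exact Fin.ext (by simp [h, hvm1])
      · intro h; subst h; simp [hvm1]
    rw [if_congr e0 rfl rfl, if_congr (or_congr e1 e2) rfl rfl]
    by_cases hk0 : k = 0
    · subst hk0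
      have : ¬((0:Fin (m+3)) = 1) := by intro h; apply_fun Fin.val at h; simp [hv1] at h
      have h2 : ¬((0:Fin (m+3)) = -1) := by intro h; apply_fun Fin.val at h; simp [hvm1] at h
      simp [this, h2]
    · by_cases hk1 : k = 1
      · subst hk1
        have h2 : ¬((1:Fin (m+3)) = -1) := by
          intro h; apply_fun Fin.val at h; rw [hv1, hvm1] at h; omega
        simp [hk0, h2]
      · by_cases hkm1 : k = -1
        · subst hkm1
          simp [hk0, hk1, sub_neg_eq_add]
        · simp [hk0, hk1, hkm1]
  simp_rw [hsplit]
  rw [Finset.sum_add_distrib, Finset.sum_add_distrib]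
  simp
  ring

lemma sum_shift (h : Fin n → ℝ) : ∑ i, h (i + 1) = ∑ i, h i :=
  Fintype.sum_equiv (Equiv.addRight 1) _ _ (fun _ => rfl)

lemma quad_eq (hn : 3 ≤ n) (y : Fin n → ℝ) :
    (Lmat n *ᵥ y) ⬝ᵥ y = -∑ i, (y (i+1) - y i)^2 := by
  have h1 : ∑ i : Fin n, y (i+1) * y (i+1) = ∑ i, y i * y i :=
    sum_shift (fun i => y i * y i)
  have h2 : ∑ i : Fin n, y (i-1) * y i = ∑ i, y i * y (i+1) := by
    have := sum_shift (fun i => y (i-1) * y i)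
    simpa using this.symm
  have e1 : (Lmat n *ᵥ y) ⬝ᵥ y
      = (∑ i, y (i-1) * y i) - 2*(∑ i, y i * y i) + ∑ i, y i * y (i+1) := by
    calc (Lmat n *ᵥ y) ⬝ᵥ y
        = ∑ i, (y (i-1) * y i - 2*(y i * y i) + y i * y (i+1)) := by
          simp only [dotProduct]
          exact Finset.sum_congr rfl (fun i _ => by rw [Lmat_mulVec hn]; ring)
      _ = _ := by
          rw [Finset.sum_add_distrib, Finset.sum_sub_distrib, ← Finset.mul_sum]
  have e2 : ∑ i : Fin n, (y (i+1) - y i)^2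
      = (∑ i, y (i+1) * y (i+1)) - 2*(∑ i, y i * y (i+1)) + ∑ i, y i * y i := by
    calc ∑ i : Fin n, (y (i+1) - y i)^2
        = ∑ i, (y (i+1) * y (i+1) - 2*(y i * y (i+1)) + y i * y i) :=
          Finset.sum_congr rfl (fun i _ => by ring)
      _ = _ := by
          rw [Finset.sum_add_distrib, Finset.sum_sub_distrib, ← Finset.mul_sum]
  rw [e1, e2]
  linarith [h1, h2]

lemma quad_le (y : Fin n → ℝ) : ∑ i : Fin n, (y (i+1) - y i)^2 ≤ 4 * (y ⬝ᵥ y) := by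
  have h1 : ∑ i : Fin n, y (i+1) * y (i+1) = ∑ i, y i * y i :=
    sum_shift (fun i => y i * y i)
  have h : ∑ i : Fin n, (y (i+1) - y i)^2
      ≤ ∑ i : Fin n, (2*(y (i+1) * y (i+1)) + 2*(y i * y i)) :=
    Finset.sum_le_sum (fun i _ => by nlinarith [sq_nonneg (y (i+1) + y i)])
  rw [Finset.sum_add_distrib, ← Finset.mul_sum, ← Finset.mul_sum, h1] at h
  simp only [dotProduct]
  linarith

lemma quad_sq (hn : 3 ≤ n) (y : Fin n → ℝ) :
    (Lmat n *ᵥ y) ⬝ᵥ (Lmat n *ᵥ y) ≤ 4 * ∑ i : Fin n, (y (i+1) - y i)^2 := by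
  set z : Fin n → ℝ := fun i => y (i+1) - y i with hz
  have hshift : ∑ i : Fin n, z i ^ 2 = ∑ i, z (i-1) ^ 2 := by
    have := sum_shift (fun i => z (i-1)^2)
    simpa using this
  have hb : ∀ i, (Lmat n *ᵥ y) i = z i - z (i-1) := by
    intro i
    rw [Lmat_mulVec hn]
    simp only [hz, sub_add_cancel]
    ring
  calc (Lmat n *ᵥ y) ⬝ᵥ (Lmat n *ᵥ y)
      = ∑ i, (z i - z (i-1))^2 := by
        simp only [dotProduct]
        exact Finset.sum_congr rfl (fun i _ => by rw [hb]; ring)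
    _ ≤ ∑ i, (2 * z i ^ 2 + 2 * z (i-1)^2) :=
        Finset.sum_le_sum (fun i _ => by nlinarith [sq_nonneg (z i + z (i-1))])
    _ = 4 * ∑ i, z i ^ 2 := by
        rw [Finset.sum_add_distrib, ← Finset.mul_sum, ← Finset.mul_sum, hshift.symm]; ring
    _ = 4 * ∑ i : Fin n, (y (i+1) - y i)^2 := rfl

lemma Amat_mulVec (σ : ℝ) (d : Fin n → ℝ) :
    Amat n σ *ᵥ d = d - σ • (Lmat n *ᵥ d) := by
  rw [Amat, sub_mulVec, one_mulVec, smul_mulVec]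

lemma key_ineq (hn : 3 ≤ n) {σ C : ℝ} (hσ : 0 < σ) (hσC : σ ≤ C) (d : Fin n → ℝ) :
    (1 + 8*C) * ((Amat n σ *ᵥ d) ⬝ᵥ (Amat n σ *ᵥ d))
      ≤ 2*(1+4*C)^2 * ((Amat n σ *ᵥ d) ⬝ᵥ d - (1/2) * (d ⬝ᵥ d)) := by
  have hC : 0 < C := lt_of_lt_of_le hσ hσC
  rw [Amat_mulVec]
  set u := Lmat n *ᵥ d with hu
  set s := ∑ i : Fin n, (d (i+1) - d i)^2 with hs
  set t := d ⬝ᵥ d with htd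
  have hs0 : 0 ≤ s := Finset.sum_nonneg (fun i _ => sq_nonneg _)
  have hud : u ⬝ᵥ d = -s := quad_eq hn d
  have hdu : d ⬝ᵥ u = -s := by rw [dotProduct_comm]; exact hud
  have hs4 : s ≤ 4 * t := quad_le d
  have huu : u ⬝ᵥ u ≤ 4 * s := quad_sq hn d
  have ht0 : 0 ≤ t := Finset.sum_nonneg (fun i _ => mul_self_nonneg _)
  simp only [sub_dotProduct, dotProduct_sub, smul_dotProduct, dotProduct_smul,
    smul_eq_mul, hud, hdu]
  nlinarith [mul_le_mul_of_nonneg_left huu (by positivity : (0:ℝ) ≤ (1+8*C)*σ^2),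
    mul_nonneg (sq_nonneg C) (by linarith : (0:ℝ) ≤ 4*t - s),
    mul_nonneg (mul_nonneg hs0 (by linarith : (0:ℝ) ≤ C - σ))
      (by positivity : (0:ℝ) ≤ C + σ + 8*C*σ)]

lemma Amat_isUnit (hn : 3 ≤ n) {σ : ℝ} (hσ : 0 < σ) : IsUnit (Amat n σ) := by
  rw [← Matrix.mulVec_injective_iff_isUnit]
  intro a b hab
  have h0 : Amat n σ *ᵥ (a - b) = 0 := by
    rw [mulVec_sub, hab, sub_self]
  set e := a - b with he
  have hq : (Amat n σ *ᵥ e) ⬝ᵥ e = 0 := by rw [h0, zero_dotProduct]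
  rw [Amat_mulVec, sub_dotProduct, smul_dotProduct, quad_eq hn] at hq
  have hs0 : (0:ℝ) ≤ ∑ i : Fin n, (e (i+1) - e i)^2 :=
    Finset.sum_nonneg (fun i _ => sq_nonneg _)
  have ht0 : (0:ℝ) ≤ e ⬝ᵥ e := Finset.sum_nonneg (fun i _ => mul_self_nonneg _)
  have hsm : σ • (-∑ i : Fin n, (e (i+1) - e i)^2) ≤ 0 := by
    simp only [smul_eq_mul]
    nlinarith
  have hee : e ⬝ᵥ e = 0 := by
    simp only [smul_eq_mul] at hq ⊢
    nlinarith
  have : e = 0 := (dotProduct_self_eq_zero).1 hee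
  exact sub_eq_zero.1 this

lemma Amat_cancel (hn : 3 ≤ n) {σ : ℝ} (hσ : 0 < σ) (g : EuclideanSpace ℝ (Fin n)) :
    (Matrix.toEuclideanCLM (𝕜 := ℝ) (n := Fin n) (Amat n σ))
      ((Matrix.toEuclideanCLM (𝕜 := ℝ) (n := Fin n) ((Amat n σ)⁻¹)) g) = g := by
  have hAB : Amat n σ * (Amat n σ)⁻¹ = 1 :=
    mul_nonsing_inv _ ((Matrix.isUnit_iff_isUnit_det _).1 (Amat_isUnit hn hσ))
  have hm := map_mul (Matrix.toEuclideanCLM (𝕜 := ℝ) (n := Fin n)) (Amat n σ) ((Amat n σ)⁻¹)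
  have h1 : (Matrix.toEuclideanCLM (𝕜 := ℝ) (n := Fin n) (Amat n σ * (Amat n σ)⁻¹)) g = g := by
    rw [hAB, _root_.map_one]; rfl
  rw [hm] at h1
  exact h1

open RealInnerProductSpace in
lemma key_eucl (hn : 3 ≤ n) {σ C : ℝ} (hσ : 0 < σ) (hσC : σ ≤ C)
    (g : EuclideanSpace ℝ (Fin n)) :
    (1 + 8*C) / (2*(1+4*C)^2) * ‖g‖^2
      ≤ ⟪g, (Matrix.toEuclideanCLM (𝕜 := ℝ) (n := Fin n) ((Amat n σ)⁻¹)) g⟫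
        - (1/2) * ‖(Matrix.toEuclideanCLM (𝕜 := ℝ) (n := Fin n) ((Amat n σ)⁻¹)) g‖^2 := by
  have hC : 0 < C := lt_of_lt_of_le hσ hσC
  set dvec := (Matrix.toEuclideanCLM (𝕜 := ℝ) (n := Fin n) ((Amat n σ)⁻¹)) g with hdvec
  set d : Fin n → ℝ := WithLp.equiv 2 _ dvec with hd
  have hg : WithLp.equiv 2 (Fin n → ℝ) g = Amat n σ *ᵥ d := by
    rw [← Amat_cancel hn hσ g, ← hdvec]
    exact Matrix.ofLp_toEuclideanCLM _ _
  have hinner : ∀ u v : EuclideanSpace ℝ (Fin n),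
      ⟪u, v⟫ = (WithLp.equiv 2 (Fin n → ℝ) u) ⬝ᵥ (WithLp.equiv 2 (Fin n → ℝ) v) := by
    intro u v
    simp [PiLp.inner_apply, dotProduct, mul_comm]
  have h1 : ⟪g, dvec⟫ = (Amat n σ *ᵥ d) ⬝ᵥ d := by rw [hinner, hg]
  have h2 : ‖dvec‖^2 = d ⬝ᵥ d := by
    rw [← real_inner_self_eq_norm_sq, hinner]
  have h3 : ‖g‖^2 = (Amat n σ *ᵥ d) ⬝ᵥ (Amat n σ *ᵥ d) := by
    rw [← real_inner_self_eq_norm_sq, hinner, hg]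
  rw [h1, h2, h3, div_mul_eq_mul_div, div_le_iff₀ (by positivity)]
  have := key_ineq hn hσ hσC d
  linarith

end Aux

open RealInnerProductSpace in
theorem stmt13 (n : ℕ) (hn : 3 ≤ n) (f : EuclideanSpace ℝ (Fin n) → ℝ)
    (hf : Differentiable ℝ f) (ℓ : ℝ) (hℓ : 0 < ℓ)
    -- `f` is `ℓ`-smooth:
    (hsmooth : ∀ x y : EuclideanSpace ℝ (Fin n),
      f y ≤ f x + ⟪gradient f x, y - x⟫ + (ℓ / 2) * ‖x - y‖ ^ 2)
    -- `f` is bounded below by `f*`: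
    (fstar : ℝ) (hbdd : ∀ y, fstar ≤ f y)
    (C : ℝ) (hC : 0 < C) (σ : ℕ → ℝ) (hσ : ∀ k, 0 < σ k ∧ σ k ≤ C)
    -- the modified LSGD iterates `x^{k+1} = x^k - (1/ℓ) A_{σ(k)}⁻¹ ∇f(x^k)`:
    (x : ℕ → EuclideanSpace ℝ (Fin n))
    (hrec : ∀ k, x (k + 1) = x k - (1 / ℓ) •
      (Matrix.toEuclideanCLM (𝕜 := ℝ) (n := Fin n) ((Amat n (σ k))⁻¹)) (gradient f (x k))) :
    -- an `ε`-first-order stationary point is reached within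
    -- `2(1+4C)²ℓ(f(x⁰) - f*)/((1+8C)ε²)` iterations:
    ∀ ε : ℝ, 0 < ε → ∃ k : ℕ,
      (k : ℝ) ≤ 2 * (1 + 4 * C) ^ 2 * ℓ * (f (x 0) - fstar) / ((1 + 8 * C) * ε ^ 2) ∧
      ‖gradient f (x k)‖ ≤ ε := by
  haveI : NeZero n := ⟨by omega⟩
  intro ε hε
  set c : ℝ := (1 + 8*C) / (2*(1+4*C)^2) with hc
  have hcpos : 0 < c := by positivity
  -- per-step descent
  have descent : ∀ k, f (x (k+1)) ≤ f (x k) - (c/ℓ) * ‖gradient f (x k)‖^2 := by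
    intro k
    set g := gradient f (x k) with hg
    set d := (Matrix.toEuclideanCLM (𝕜 := ℝ) (n := Fin n) ((Amat n (σ k))⁻¹)) g with hd
    have hstep : x (k+1) - x k = -((1/ℓ) • d) := by
      rw [hrec k]; abel
    have hstep' : x k - x (k+1) = (1/ℓ) • d := by
      rw [hrec k]; abel
    have hIP : ⟪g, x (k+1) - x k⟫ = -((1/ℓ) * ⟪g, d⟫) := by
      rw [hstep, inner_neg_right, real_inner_smul_right]
    have hNorm : ‖x k - x (k+1)‖^2 = (1/ℓ)^2 * ‖d‖^2 := by
      rw [hstep', norm_smul, mul_pow]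
      congr 1
      rw [Real.norm_eq_abs, sq_abs]
    have hkey := key_eucl hn (hσ k).1 (hσ k).2 g
    have hsm := hsmooth (x k) (x (k+1))
    rw [hIP, hNorm] at hsm
    have hml : ℓ/2 * ((1/ℓ)^2 * ‖d‖^2) = (1/ℓ) * ((1/2) * ‖d‖^2) := by
      field_simp
    rw [hml] at hsm
    have hmul := mul_le_mul_of_nonneg_left hkey (le_of_lt (by positivity : (0:ℝ) < 1/ℓ))
    have hcl : (1/ℓ) * (c * ‖g‖^2) = (c/ℓ) * ‖g‖^2 := by ring
    calc f (x (k+1)) ≤ f (x k) - (1/ℓ) * ⟪g, d⟫ + (1/ℓ) * ((1/2) * ‖d‖^2) := by linarith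
      _ ≤ f (x k) - (c/ℓ) * ‖g‖^2 := by
          rw [mul_sub] at hmul
          rw [← hcl]
          linarith
  -- telescoping sum
  have sum_bound : ∀ K : ℕ,
      f (x K) + (c/ℓ) * ∑ k ∈ Finset.range K, ‖gradient f (x k)‖^2 ≤ f (x 0) := by
    intro K
    induction K with
    | zero => simp
    | succ K ih =>
        rw [Finset.sum_range_succ]
        have := descent K
        linarith
  set Δ : ℝ := f (x 0) - fstar with hΔ
  have hΔ0 : 0 ≤ Δ := by
    have := hbdd (x 0); simp [hΔ]; linarith
  set bound : ℝ := 2 * (1 + 4 * C) ^ 2 * ℓ * (f (x 0) - fstar) / ((1 + 8 * C) * ε ^ 2)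
    with hbound
  have hbound0 : 0 ≤ bound := by
    apply div_nonneg _ (by positivity)
    have : (0:ℝ) ≤ 2 * (1 + 4 * C) ^ 2 * ℓ := by positivity
    calc (0:ℝ) ≤ (2 * (1 + 4 * C) ^ 2 * ℓ) * Δ := mul_nonneg this hΔ0
      _ = 2 * (1 + 4 * C) ^ 2 * ℓ * (f (x 0) - fstar) := by rw [hΔ]
  by_contra hcon
  push_neg at hcon
  set K : ℕ := Nat.floor bound + 1 with hK
  have hterm : ∀ k ∈ Finset.range K, ε^2 ≤ ‖gradient f (x k)‖^2 := by
    intro k hk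
    have hkK : k ≤ Nat.floor bound := by
      simp only [Finset.mem_range, hK] at hk; omega
    have hkb : (k:ℝ) ≤ bound :=
      le_trans (Nat.cast_le.2 hkK) (Nat.floor_le hbound0)
    have := hcon k hkb
    nlinarith
  have hsum : (K:ℝ) * ε^2 ≤ ∑ k ∈ Finset.range K, ‖gradient f (x k)‖^2 := by
    have := Finset.card_nsmul_le_sum (Finset.range K)
      (fun k => ‖gradient f (x k)‖^2) (ε^2) hterm
    simpa [nsmul_eq_mul, Finset.card_range] using this
  have hfK := hbdd (x K)
  have hmain : (c/ℓ) * ((K:ℝ) * ε^2) ≤ Δ := by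
    have h1 := sum_bound K
    have h2 := mul_le_mul_of_nonneg_left hsum (le_of_lt (by positivity : (0:ℝ) < c/ℓ))
    simp only [hΔ]
    linarith
  have hKb : (K:ℝ) ≤ bound := by
    rw [hbound, le_div_iff₀ (by positivity)]
    have hscale := mul_le_mul_of_nonneg_left hmain
      (le_of_lt (by positivity : (0:ℝ) < 2*(1+4*C)^2*ℓ))
    have heq : (2*(1+4*C)^2*ℓ) * ((c/ℓ) * ((K:ℝ) * ε^2)) = (K:ℝ) * ((1 + 8*C) * ε^2) := by
      rw [hc]; field_simp
    rw [heq] at hscale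
    calc (K:ℝ) * ((1 + 8*C) * ε^2) ≤ 2*(1+4*C)^2*ℓ * Δ := hscale
      _ = 2*(1+4*C)^2*ℓ * (f (x 0) - fstar) := by rw [hΔ]
  have hlt : bound < (K:ℝ) := by
    have := Nat.lt_floor_add_one bound
    simpa [hK] using this
  linarith
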